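/- Let h ≥ p ≥ 1 be integers and let T be a finite tree with diameter at least 3 and maximum degree Δ. If T contains T̂_{Δ−1,2} as a subtree (equivalently, T has a vertex of degree Δ all of whose neighbours have degree Δ), then λ_{h,p,p}(T) = λ*_{h,p,p}(T) = h + 2(Δ − 1)·p. -/

import Mathlib

open SimpleGraph

/-- An `L(h,p,p)`-labelling of `G` with span `ℓ`: labels in `{0,…,ℓ}`, labels of vertices at
distance 1 differ by at least `h`, labels of vertices at distance 2 or 3 differ by at least `p`. -/
def IsLLabelling {V : Type} (G : SimpleGraph V) (h p ℓ : ℕ) (f : V → ℕ) : Prop :=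
  (∀ v, f v ≤ ℓ) ∧
  (∀ u v, G.dist u v = 1 → (h : ℤ) ≤ |(f u : ℤ) - (f v : ℤ)|) ∧
  (∀ u v, G.dist u v = 2 ∨ G.dist u v = 3 → (p : ℤ) ≤ |(f u : ℤ) - (f v : ℤ)|)

/-- `λ_{h,p,p}(G)`: the minimum span of an `L(h,p,p)`-labelling of `G`. -/
noncomputable def lambdaNum {V : Type} (G : SimpleGraph V) (h p : ℕ) : ℕ :=
  sInf {ℓ : ℕ | ∃ f : V → ℕ, IsLLabelling G h p ℓ f}

/-- A circular interval modulo `n`: a set of residues of the form `{a, a+1, …, a+s}` mod `n`. -/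
def IsCircInterval (n : ℕ) (I : Set (ZMod n)) : Prop :=
  ∃ (a : ZMod n) (s : ℕ), I = {x : ZMod n | ∃ i : ℕ, i ≤ s ∧ x = a + (i : ZMod n)}

/-- An elegant `L(h,p,p)`-labelling: additionally each vertex `u` has a circular interval `I u`
modulo `ℓ+1` containing the labels of all neighbours of `u`, with `I u ∩ I v = ∅` for edges `uv`. -/
def IsElegantLLabelling {V : Type} (G : SimpleGraph V) (h p ℓ : ℕ) (f : V → ℕ) : Prop :=
  IsLLabelling G h p ℓ f ∧
  ∃ I : V → Set (ZMod (ℓ + 1)),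
    (∀ u, IsCircInterval (ℓ + 1) (I u)) ∧
    (∀ u w, G.Adj u w → ((f w : ZMod (ℓ + 1)) ∈ I u)) ∧
    (∀ u v, G.Adj u v → I u ∩ I v = ∅)

/-- `λ*_{h,p,p}(G)`: the minimum span of an elegant `L(h,p,p)`-labelling of `G`. -/
noncomputable def lambdaStar {V : Type} (G : SimpleGraph V) (h p : ℕ) : ℕ :=
  sInf {ℓ : ℕ | ∃ f : V → ℕ, IsElegantLLabelling G h p ℓ f}

/-- The `ℓ`-cyclic distance between labels `a` and `b`. -/
def cycDist (ℓ a b : ℕ) : ℤ :=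
  min |(a : ℤ) - (b : ℤ)| ((ℓ : ℤ) - |(a : ℤ) - (b : ℤ)|)

/-- A `C(h,p,p)`-labelling of `G` with span `ℓ`: labels in `{0,…,ℓ-1}`, and the `ℓ`-cyclic distance
between labels of vertices at distance 1 (resp. 2 or 3) is at least `h` (resp. `p`). -/
def IsCLabelling {V : Type} (G : SimpleGraph V) (h p ℓ : ℕ) (f : V → ℕ) : Prop :=
  (∀ v, f v < ℓ) ∧
  (∀ u v, G.dist u v = 1 → (h : ℤ) ≤ cycDist ℓ (f u) (f v)) ∧
  (∀ u v, G.dist u v = 2 ∨ G.dist u v = 3 → (p : ℤ) ≤ cycDist ℓ (f u) (f v))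

/-- `σ_{h,p,p}(G)`: the minimum positive `ℓ` such that `G` has a `C(h,p,p)`-labelling of span `ℓ`. -/
noncomputable def sigmaNum {V : Type} (G : SimpleGraph V) (h p : ℕ) : ℕ :=
  sInf {ℓ : ℕ | 0 < ℓ ∧ ∃ f : V → ℕ, IsCLabelling G h p ℓ f}

/-- An elegant `C(h,p,p)`-labelling: additionally each vertex `u` has a circular interval `I u`
modulo `ℓ` containing the labels of all neighbours of `u`, with `I u ∩ I v = ∅` for edges `uv`. -/
def IsElegantCLabelling {V : Type} (G : SimpleGraph V) (h p ℓ : ℕ) (f : V → ℕ) : Prop :=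
  IsCLabelling G h p ℓ f ∧
  ∃ I : V → Set (ZMod ℓ),
    (∀ u, IsCircInterval ℓ (I u)) ∧
    (∀ u w, G.Adj u w → ((f w : ZMod ℓ) ∈ I u)) ∧
    (∀ u v, G.Adj u v → I u ∩ I v = ∅)

/-- `σ*_{h,p,p}(G)`: the minimum positive `ℓ` such that `G` has an elegant `C(h,p,p)`-labelling
of span `ℓ`. -/
noncomputable def sigmaStar {V : Type} (G : SimpleGraph V) (h p : ℕ) : ℕ :=
  sInf {ℓ : ℕ | 0 < ℓ ∧ ∃ f : V → ℕ, IsElegantCLabelling G h p ℓ f}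

/-- `Δ₂(G) = max over edges uv of (deg u + deg v)`. -/
noncomputable def deltaTwo {V : Type} (G : SimpleGraph V) [Fintype V] [DecidableRel G.Adj] : ℕ :=
  sSup {d : ℕ | ∃ u v : V, G.Adj u v ∧ d = G.degree u + G.degree v}

/-!
Upper bound: 2-colour the tree and give every vertex a colour `c v < Δ` that is injective on
each neighbourhood (propagated outward from a root). Label one colour class inside
`[0, (Δ-1)p]` and the other inside `[h + (Δ-1)p, h + 2(Δ-1)p]`, at offset `p·c v` within the
block; the two blocks also serve as the circular intervals of elegance.

Lower bound: let `r` have degree `Δ` with all neighbours of degree `Δ`, and let `v` be the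
neighbour of `r` whose label is closest to `f r`, say `f r < f v`. The `2Δ` vertices of
`N(r) ∪ N(v)` are pairwise at distance at most 3, so their labels are `p`-separated, and every
one of them below `f v` is at least `h` below it. Packing the labels below and above `f v`
separately gives `h + 2Δp ≤ ℓ + 2p`.
-/

theorem Finset.add_card_mul_le_of_separated {p lo b : ℤ} (A : Finset ℤ) (hlo : lo ≤ b)
    (hA : ∀ a ∈ A, lo ≤ a ∧ a + p ≤ b) (hsep : ∀ a ∈ A, ∀ a' ∈ A, a < a' → a + p ≤ a') :
    lo + A.card * p ≤ b := by
  induction A using Finset.induction_on_max generalizing b with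
  | empty => simpa using hlo
  | insert a s hmax ih =>
    have has : a ∉ s := fun h => (hmax a h).false
    have hs : lo + s.card * p ≤ a :=
      ih (hA a (s.mem_insert_self a)).1 (fun x hx => ⟨(hA x (s.mem_insert_of_mem hx)).1,
        hsep x (s.mem_insert_of_mem hx) a (s.mem_insert_self a) (hmax x hx)⟩)
        (fun x hx x' hx' => hsep x (s.mem_insert_of_mem hx) x' (s.mem_insert_of_mem hx'))
    rw [Finset.card_insert_of_notMem has]
    push_cast
    linarith [(hA a (s.mem_insert_self a)).2]

theorem Finset.add_card_mul_le_of_separated_of_gap {p h ℓ y : ℤ} (A : Finset ℤ) (hp : 0 ≤ p)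
    (hA : ∀ a ∈ A, 0 ≤ a ∧ a ≤ ℓ) (hsep : ∀ a ∈ A, ∀ a' ∈ A, a < a' → a + p ≤ a')
    (hgap : ∀ a ∈ A, a < y → a + h ≤ y) (hhy : h ≤ y) (hyℓ : y ≤ ℓ) :
    h + A.card * p ≤ ℓ + 2 * p := by
  have hbelow := (A.filter (· < y)).add_card_mul_le_of_separated (lo := 0) (b := y - h + p)
    (by linarith) (fun a ha => by
      rw [Finset.mem_filter] at ha
      exact ⟨(hA a ha.1).1, by linarith [hgap a ha.1 ha.2]⟩)
    (fun a ha a' ha' => hsep a (Finset.mem_of_mem_filter a ha) a' (Finset.mem_of_mem_filter a' ha'))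
  have habove := (A.filter (¬ · < y)).add_card_mul_le_of_separated (lo := y) (b := ℓ + p)
    (by linarith) (fun a ha => by
      rw [Finset.mem_filter] at ha
      exact ⟨not_lt.mp ha.2, by linarith [(hA a ha.1).2]⟩)
    (fun a ha a' ha' => hsep a (Finset.mem_of_mem_filter a ha) a' (Finset.mem_of_mem_filter a' ha'))
  have hcard : (A.card : ℤ) * p =
      (A.filter (· < y)).card * p + (A.filter (¬ · < y)).card * p := by
    rw [← A.card_filter_add_card_filter_not (· < y)]
    push_cast
    ring
  linarith

theorem abs_natCast_tsub_sub_natCast_tsub {ℓ a b : ℕ} (ha : a ≤ ℓ) (hb : b ≤ ℓ) :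
    |((ℓ - a : ℕ) : ℤ) - (ℓ - b : ℕ)| = |(a : ℤ) - b| := by
  rw [Nat.cast_sub ha, Nat.cast_sub hb, ← abs_neg]
  ring_nf

namespace SimpleGraph

variable {V : Type} {G : SimpleGraph V}

theorem Connected.dist_le_three_of_adj (hG : G.Connected) {r v a b : V} (hrv : G.Adj r v)
    (ha : G.Adj r a ∨ G.Adj v a) (hb : G.Adj r b ∨ G.Adj v b) : G.dist a b ≤ 3 := by
  have hrv1 := dist_eq_one_iff_adj.mpr hrv
  have hvr1 := dist_eq_one_iff_adj.mpr hrv.symm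
  have hnear : ∀ x, G.Adj r x ∨ G.Adj v x → G.dist r x ≤ 2 ∧ G.dist v x ≤ 2 := by
    rintro x (hx | hx) <;> have hx1 := dist_eq_one_iff_adj.mpr hx
    · exact ⟨by omega, (hG.dist_triangle (v := r)).trans (by omega)⟩
    · exact ⟨(hG.dist_triangle (v := v)).trans (by omega), by omega⟩
  rcases ha with ha | ha <;> have ha1 := dist_eq_one_iff_adj.mpr ha.symm
  · exact (hG.dist_triangle (v := r)).trans (by have := (hnear b hb).1; omega)
  · exact (hG.dist_triangle (v := v)).trans (by have := (hnear b hb).2; omega)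

theorem exists_adj_adj_of_dist_eq_two {u w : V} (huw : G.dist u w = 2) :
    ∃ m, G.Adj m u ∧ G.Adj m w := by
  have : G.edist u w = 2 := by
    rw [dist, ENat.toNat_eq_iff two_ne_zero] at huw
    exact_mod_cast huw
  obtain ⟨m, hm⟩ := (edist_eq_two_iff.mp this).2.2
  rw [mem_commonNeighbors] at hm
  exact ⟨m, hm.1.symm, hm.2.symm⟩

theorem Coloring.eq_iff_even_dist (b : G.Coloring Bool) {u w : V} (huw : G.dist u w ≠ 0) :
    b u = b w ↔ Even (G.dist u w) := by
  obtain ⟨P, hP⟩ := exists_walk_of_dist_ne_zero huw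
  rw [← hP, b.even_length_iff_congr P, Bool.eq_iff_iff]

theorem IsAcyclic.eq_concat_or_eq_concat (hG : G.IsAcyclic) {r m w : V} {P : G.Walk r m}
    {Q : G.Walk r w} (hP : P.IsPath) (hQ : Q.IsPath) (hmw : G.Adj m w) :
    Q = P.concat hmw ∨ P = Q.concat hmw.symm := by
  by_cases hm : m ∈ Q.support
  · exact .inl (hG.path_concat hP hQ hmw hm)
  · exact .inr (hG.path_concat hQ hP hmw.symm
      (hG.mem_support_of_ne_mem_support_of_adj_of_isPath hP hQ hmw hm))

theorem IsTree.exists_forall_injOn_neighborSet {α : Type*} [AddCommGroup α] (hG : G.IsTree)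
    (he : ∀ m, ∃ e : V → α, Set.InjOn e (G.neighborSet m)) :
    ∃ c : V → α, ∀ m, Set.InjOn c (G.neighborSet m) := by
  choose e he using he
  obtain ⟨r⟩ := hG.connected.nonempty
  choose P hP _ using hG.existsUnique_path r
  -- Along the path from `r`, carry `(c m, k m)` such that `c w = e m w + k m` for all
  -- neighbours `w` of `m`; stepping from `m` to `w` fixes `c w`, and `k w` is chosen so that
  -- the formula at `w` also returns `c m`.
  let step (s : α × α) (d : G.Dart) : α × α := (e d.fst d.snd + s.2, s.1 - e d.snd d.fst)
  let state (v : V) : α × α := (P v).darts.foldl step (0, 0)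
  have hstate : ∀ m w, G.Adj m w → (state w).1 = e m w + (state m).2 := by
    intro m w hmw
    rcases hG.isAcyclic.eq_concat_or_eq_concat (hP m) (hP w) hmw with hw | hm
    · simp only [state, hw, Walk.darts_concat, List.concat_eq_append, List.foldl_concat, step]
    · simp only [state, hm, Walk.darts_concat, List.concat_eq_append, List.foldl_concat, step]
      abel
  refine ⟨fun v => (state v).1, fun m u hu w hw huw => he m hu hw ?_⟩
  simpa [hstate m u hu, hstate m w hw] using huw

end SimpleGraph

def blockLabel {V : Type} (b : V → Bool) (c : V → ℕ) (h p d : ℕ) (v : V) : ℕ :=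
  cond (b v) (h + d * p) 0 + p * c v

section BlockLabel

variable {V : Type} {G : SimpleGraph V} {h p d : ℕ} (b : G.Coloring Bool) {c : V → ℕ}

theorem blockLabel_le (hc : ∀ v, c v ≤ d) (v : V) :
    blockLabel b c h p d v ≤ h + 2 * d * p := by
  have := Nat.mul_le_mul_left p (hc v)
  unfold blockLabel
  cases b v <;> simp only [cond_true, cond_false] <;> nlinarith

theorem le_abs_blockLabel_sub_of_ne (hc : ∀ v, c v ≤ d) {u w : V} (huw : b u ≠ b w) :
    (h : ℤ) ≤ |(blockLabel b c h p d u : ℤ) - blockLabel b c h p d w| := by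
  wlog hu : b u = true generalizing u w
  · rw [abs_sub_comm]
    exact this huw.symm (by simpa [hu] using huw.symm)
  have hw : b w = false := by simpa [hu] using huw
  have hcu := Nat.mul_le_mul_left p (hc u)
  have hcw := Nat.mul_le_mul_left p (hc w)
  refine le_trans ?_ (le_abs_self _)
  simp only [blockLabel, hu, hw, cond_true, cond_false]
  push_cast
  nlinarith

theorem le_abs_blockLabel_sub_of_eq {u w : V} (huw : b u = b w) (hcuw : c u ≠ c w) :
    (p : ℤ) ≤ |(blockLabel b c h p d u : ℤ) - blockLabel b c h p d w| := by
  have hdiff :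
      (blockLabel b c h p d u : ℤ) - blockLabel b c h p d w = p * ((c u : ℤ) - c w) := by
    simp only [blockLabel, huw]
    push_cast
    ring
  have : (1 : ℤ) ≤ |(c u : ℤ) - c w| :=
    Int.one_le_abs (sub_ne_zero.mpr (by exact_mod_cast hcuw))
  rw [hdiff, abs_mul, Nat.abs_cast]
  nlinarith

theorem isLLabelling_blockLabel (hc : ∀ v, c v ≤ d)
    (hinj : ∀ m, Set.InjOn c (G.neighborSet m)) (hph : p ≤ h) :
    IsLLabelling G h p (h + 2 * d * p) (blockLabel b c h p d) := by
  refine ⟨blockLabel_le b hc, fun u w huw => ?_, fun u w huw => ?_⟩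
  · exact le_abs_blockLabel_sub_of_ne b hc (b.valid (dist_eq_one_iff_adj.mp huw))
  obtain huw | huw := huw
  · obtain ⟨m, hmu, hmw⟩ := exists_adj_adj_of_dist_eq_two huw
    have hne : u ≠ w := by rintro rfl; simp at huw
    refine le_abs_blockLabel_sub_of_eq b ((b.eq_iff_even_dist (by omega)).mpr (by simp [huw])) ?_
    exact fun hcuw => hne (hinj m hmu hmw hcuw)
  · have hb : b u ≠ b w := fun hb => by
      have := (b.eq_iff_even_dist (by omega)).mp hb
      rw [huw] at this
      exact absurd this (by decide)
    exact le_trans (by exact_mod_cast hph) (le_abs_blockLabel_sub_of_ne b hc hb)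

end BlockLabel

namespace IsLLabelling

variable {V : Type} {G : SimpleGraph V} {h p ℓ : ℕ} {f : V → ℕ}

theorem isElegantLLabelling_of_coloring (hf : IsLLabelling G h p ℓ f) (b : G.Coloring Bool) {s t : ℕ}
    (hst : s < t) (htℓ : t ≤ ℓ) (hfalse : ∀ v, b v = false → f v ≤ s)
    (htrue : ∀ v, b v = true → t ≤ f v) : IsElegantLLabelling G h p ℓ f := by
  let low : Set (ZMod (ℓ + 1)) := {x | ∃ i : ℕ, i ≤ s ∧ x = 0 + (i : ZMod (ℓ + 1))}
  let high : Set (ZMod (ℓ + 1)) :=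
    {x | ∃ i : ℕ, i ≤ ℓ - t ∧ x = t + (i : ZMod (ℓ + 1))}
  have hdisj : low ∩ high = ∅ := by
    refine Set.eq_empty_of_forall_notMem fun x ⟨⟨i, hi, hxi⟩, ⟨j, hj, hxj⟩⟩ => ?_
    have hij : ((i : ℕ) : ZMod (ℓ + 1)) = ((t + j : ℕ) : ZMod (ℓ + 1)) := by
      push_cast; rw [← zero_add (i : ZMod (ℓ + 1)), ← hxi, hxj]
    rw [ZMod.natCast_eq_natCast_iff', Nat.mod_eq_of_lt (by omega),
      Nat.mod_eq_of_lt (by omega)] at hij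
    omega
  refine ⟨hf, fun u => cond (b u) low high, fun u => ?_, fun u w huw => ?_,
    fun u w huw => ?_⟩
  · dsimp only
    cases b u
    exacts [⟨t, ℓ - t, rfl⟩, ⟨0, s, rfl⟩]
  · have hbw := b.valid huw
    show (f w : ZMod (ℓ + 1)) ∈ cond (b u) low high
    cases hbu : b u
    · have hw : b w = true := by simpa [hbu] using hbw.symm
      refine ⟨f w - t, by have := hf.1 w; omega, ?_⟩
      rw [← Nat.cast_add, Nat.add_sub_cancel' (htrue w hw)]
    · have hw : b w = false := by simpa [hbu] using hbw.symm
      exact ⟨f w, hfalse w hw, (zero_add _).symm⟩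
  · have hbuw := b.valid huw
    cases hbu : b u
    · have hw : b w = true := by simpa [hbu] using hbuw.symm
      simpa only [hbu, hw, cond_true, cond_false, Set.inter_comm] using hdisj
    · have hw : b w = false := by simpa [hbu] using hbuw.symm
      simpa only [hbu, hw, cond_true, cond_false] using hdisj

theorem reflect (hf : IsLLabelling G h p ℓ f) : IsLLabelling G h p ℓ (fun v => ℓ - f v) :=
  ⟨fun v => Nat.sub_le ℓ (f v),
    fun u v huv => abs_natCast_tsub_sub_natCast_tsub (hf.1 u) (hf.1 v) ▸ hf.2.1 u v huv,
    fun u v huv => abs_natCast_tsub_sub_natCast_tsub (hf.1 u) (hf.1 v) ▸ hf.2.2 u v huv⟩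

theorem le_abs_sub_of_adj_or_adj (hf : IsLLabelling G h p ℓ f) (hph : p ≤ h) (hG : G.Connected)
    {r v a b : V} (hrv : G.Adj r v) (ha : G.Adj r a ∨ G.Adj v a) (hb : G.Adj r b ∨ G.Adj v b)
    (hab : a ≠ b) : (p : ℤ) ≤ |(f a : ℤ) - f b| := by
  have hpos := hG.pos_dist_of_ne hab
  have hd := hG.dist_le_three_of_adj hrv ha hb
  obtain hd1 | hd23 : G.dist a b = 1 ∨ G.dist a b = 2 ∨ G.dist a b = 3 := by omega
  · exact le_trans (by exact_mod_cast hph) (hf.2.1 a b hd1)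
  · exact hf.2.2 a b hd23

variable [Fintype V] [DecidableRel G.Adj]

theorem card_image_union_neighborFinset [DecidableEq V] (hT : G.IsTree)
    (hf : IsLLabelling G h p ℓ f) (hp : 1 ≤ p) (hph : p ≤ h) {r v : V} (hrv : G.Adj r v) :
    ((G.neighborFinset r ∪ G.neighborFinset v).image fun w => (f w : ℤ)).card =
      G.degree r + G.degree v := by
  have hdisj : Disjoint (G.neighborFinset r) (G.neighborFinset v) := by
    refine Finset.disjoint_left.mpr fun w hwr hwv => ?_
    rw [mem_neighborFinset] at hwr hwv
    exact hT.isAcyclic.cliqueFree le_rfl {r, v, w} (is3Clique_triple_iff.mpr ⟨hrv, hwr, hwv⟩)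
  have hinj : Set.InjOn (fun w => (f w : ℤ)) ↑(G.neighborFinset r ∪ G.neighborFinset v) := by
    intro a ha b hb hab
    by_contra hne
    have := hf.le_abs_sub_of_adj_or_adj hph hT.connected hrv (by simpa using ha)
      (by simpa using hb) hne
    simp only at hab
    rw [hab, sub_self, abs_zero] at this
    omega
  rw [Finset.card_image_of_injOn hinj, Finset.card_union_of_disjoint hdisj,
    card_neighborFinset_eq_degree, card_neighborFinset_eq_degree]

theorem add_degree_add_degree_mul_le (hT : G.IsTree) (hf : IsLLabelling G h p ℓ f)
    (hp : 1 ≤ p) (hph : p ≤ h) {r v : V} (hrv : G.Adj r v)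
    (hmin : ∀ w, G.Adj r w → |(f v : ℤ) - f r| ≤ |(f w : ℤ) - f r|) :
    h + (G.degree r + G.degree v) * p ≤ ℓ + 2 * p := by
  classical
  have hrv_lab : (h : ℤ) ≤ |(f r : ℤ) - f v| := hf.2.1 r v (dist_eq_one_iff_adj.mpr hrv)
  wlog hlt : f r < f v generalizing f
  · refine this hf.reflect (fun w hw => ?_) ?_ ?_
    · simpa only [abs_natCast_tsub_sub_natCast_tsub (hf.1 _) (hf.1 _)] using hmin w hw
    · simpa only [abs_natCast_tsub_sub_natCast_tsub (hf.1 _) (hf.1 _)] using hrv_lab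
    · have : f r ≠ f v := by rintro heq; rw [heq, sub_self, abs_zero] at hrv_lab; omega
      have := hf.1 r
      omega
  have hrv_gap : (f r : ℤ) + h ≤ f v := by
    rw [abs_of_neg (by omega)] at hrv_lab
    omega
  have hgap : ∀ w, G.Adj r w ∨ G.Adj v w → (f w : ℤ) < f v → (f w : ℤ) + h ≤ f v := by
    rintro w (hw | hw) hwv
    · have := hmin w hw
      rw [abs_of_pos (by omega)] at this
      rcases le_abs'.mp this with h1 | h1 <;> omega
    · have := hf.2.1 w v (dist_eq_one_iff_adj.mpr hw.symm)
      rw [abs_of_neg (by omega)] at this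
      omega
  have := Finset.add_card_mul_le_of_separated_of_gap (h := h) (ℓ := ℓ) (y := f v) (p := p)
    ((G.neighborFinset r ∪ G.neighborFinset v).image fun w => (f w : ℤ)) (by positivity)
    (Finset.forall_mem_image.mpr fun w _ => ⟨by positivity, by exact_mod_cast hf.1 w⟩)
    (Finset.forall_mem_image.mpr fun w hw => Finset.forall_mem_image.mpr fun w' hw' hlt => by
      have := hf.le_abs_sub_of_adj_or_adj hph hT.connected hrv (by simpa using hw)
        (by simpa using hw') (by rintro rfl; exact lt_irrefl _ hlt)
      rw [abs_of_neg (by omega)] at this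
      omega)
    (Finset.forall_mem_image.mpr fun w hw => hgap w (by simpa using hw))
    (by omega) (by exact_mod_cast hf.1 v)
  rw [hf.card_image_union_neighborFinset hT hp hph hrv] at this
  exact_mod_cast this

theorem exists_adj_add_degree_add_degree_mul_le (hT : G.IsTree) (hf : IsLLabelling G h p ℓ f)
    (hp : 1 ≤ p) (hph : p ≤ h) {r : V} (hr : 0 < G.degree r) :
    ∃ v, G.Adj r v ∧ h + (G.degree r + G.degree v) * p ≤ ℓ + 2 * p := by
  obtain ⟨v, hv, hmin⟩ := (G.neighborFinset r).exists_min_image (fun w => |(f w : ℤ) - f r|)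
    (by rwa [← Finset.card_pos, card_neighborFinset_eq_degree])
  rw [mem_neighborFinset] at hv
  exact ⟨v, hv, hf.add_degree_add_degree_mul_le hT hp hph hv
    fun w hw => hmin w ((mem_neighborFinset _ _ _).mpr hw)⟩

end IsLLabelling

theorem SimpleGraph.IsTree.exists_isElegantLLabelling {V : Type} [Fintype V] {G : SimpleGraph V}
    [DecidableRel G.Adj] (hT : G.IsTree) {h p : ℕ} (hh : 0 < h) (hph : p ≤ h)
    (hΔ : 0 < G.maxDegree) :
    ∃ f, IsElegantLLabelling G h p (h + 2 * (G.maxDegree - 1) * p) f := by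
  have : NeZero G.maxDegree := ⟨hΔ.ne'⟩
  obtain ⟨c, hc⟩ := hT.exists_forall_injOn_neighborSet (α := Fin G.maxDegree) fun m => by
    rw [Set.exists_injOn_iff_injective]
    obtain ⟨e⟩ := Function.Embedding.nonempty_of_card_le (α := G.neighborSet m)
      (β := Fin G.maxDegree)
      (by rw [card_neighborSet_eq_degree, Fintype.card_fin]; exact G.degree_le_maxDegree m)
    exact ⟨e, e.injective⟩
  let b : G.Coloring Bool := G.recolorOfEquiv finTwoEquiv hT.coloringTwo
  have hcd : ∀ v, (c v : ℕ) ≤ G.maxDegree - 1 := fun v => by have := (c v).isLt; omega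
  have hinj : ∀ m, Set.InjOn (fun v => (c v : ℕ)) (G.neighborSet m) := fun m =>
    Fin.val_injective.comp_injOn (hc m)
  refine ⟨_, (isLLabelling_blockLabel b hcd hinj hph).isElegantLLabelling_of_coloring b
    (s := (G.maxDegree - 1) * p) (t := h + (G.maxDegree - 1) * p) (by omega) (by nlinarith)
    (fun v hv => ?_) (fun v hv => ?_)⟩
  · simp only [blockLabel, hv, cond_false, zero_add]
    exact (Nat.mul_le_mul_left p (hcd v)).trans_eq (Nat.mul_comm _ _)
  · simp only [blockLabel, hv, cond_true]
    exact Nat.le_add_right _ _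

theorem stmt5 {V : Type} [Fintype V] (G : SimpleGraph V) [DecidableRel G.Adj]
    (hT : G.IsTree) (hdiam : ∃ u v : V, 3 ≤ G.dist u v)
    (hsub : ∃ r : V, G.degree r = G.maxDegree ∧
      ∀ v : V, G.Adj r v → G.degree v = G.maxDegree)
    (h p : ℕ) (hp : 1 ≤ p) (hph : p ≤ h) :
    lambdaNum G h p = h + 2 * (G.maxDegree - 1) * p ∧
    lambdaStar G h p = h + 2 * (G.maxDegree - 1) * p := by
  obtain ⟨r, hr, hnbr⟩ := hsub
  obtain ⟨u, w, huw⟩ := hdiam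
  have : Nontrivial V := nontrivial_of_ne u w (by rintro rfl; simp at huw)
  have hΔ : 0 < G.maxDegree := hr ▸ hT.connected.preconnected.degree_pos_of_nontrivial r
  obtain ⟨f, hf⟩ := hT.exists_isElegantLLabelling (by omega) hph hΔ
  have hlower : ∀ ℓ f, IsLLabelling G h p ℓ f → h + 2 * (G.maxDegree - 1) * p ≤ ℓ := by
    intro ℓ f hf
    obtain ⟨v, hv, hle⟩ := hf.exists_adj_add_degree_add_degree_mul_le hT hp hph (hr ▸ hΔ)
    rw [hr, hnbr v hv] at hle
    obtain ⟨k, hk⟩ := Nat.exists_eq_add_of_lt hΔ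
    rw [hk] at hle ⊢
    simp only [zero_add, Nat.add_sub_cancel] at hle ⊢
    nlinarith
  exact ⟨IsLeast.csInf_eq ⟨⟨f, hf.1⟩, fun ℓ ⟨f, hf⟩ => hlower ℓ f hf⟩,
    IsLeast.csInf_eq ⟨⟨f, hf⟩, fun ℓ ⟨f, hf⟩ => hlower ℓ f hf.1⟩⟩
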